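/- arXiv:1305.5404 — 4 statements merged into one kernel-verified Lean document; each statement's English description precedes it below -/
import Mathlib

section
/- For the 4-bidder GSP instance with values v = (1, 0.53, 0.15, 0), CTRs α = (1, 0.55, 0.47, 0.47), and allocation permutation π = (2, 3, 1, 4), the ratio of the optimal social welfare Σ_{i=1}^{4} α_i v_i to the equilibrium social welfare Σ_{j=1}^{4} α_j v_{π(j)} equals 2724/2165, which is strictly greater than 1.258; consequently the pure Price of Anarchy of GSP with 4 slots is at least 2724/2165. -/
/-- The bid paid per click by the bidder occupying slot `j` under allocation `π`:
the bid of the occupant of the next slot, and `0` for the last slot. -/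
noncomputable def nextPay {n : ℕ} (b : Fin n → ℝ) (π : Equiv.Perm (Fin n)) (j : Fin n) : ℝ :=
  if h : (j : ℕ) + 1 < n then b (π ⟨(j : ℕ) + 1, h⟩) else 0

/-- The allocation `π` (slot `j` is given to bidder `π j`) lists bidders in
descending order of bids. -/
def Consistent {n : ℕ} (b : Fin n → ℝ) (π : Equiv.Perm (Fin n)) : Prop :=
  ∀ i j : Fin n, i ≤ j → b (π j) ≤ b (π i)

/-- Bidders are conservative: nobody bids above their value. -/
def Conservative {n : ℕ} (v b : Fin n → ℝ) : Prop :=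
  ∀ i, b i ≤ v i

/-- `(b, π)` is a pure Nash equilibrium of the GSP auction with values `v` and
click-through rates `α`: `π` is consistent with `b`, and the bidder occupying
slot `j` does not prefer to take any other slot `i` (paying the bid of the
occupant of slot `i` if `i < j`, and the bid of the occupant of slot `i+1`
if `i > j`). -/
def PureNash {n : ℕ} (v α b : Fin n → ℝ) (π : Equiv.Perm (Fin n)) : Prop :=
  Consistent b π ∧
  ∀ j i : Fin n,
    (i < j → α i * (v (π j) - b (π i)) ≤ α j * (v (π j) - nextPay b π j)) ∧
    (j < i → α i * (v (π j) - nextPay b π i) ≤ α j * (v (π j) - nextPay b π j))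

/-- The permutation `(2, 3, 1, 4)`: bidder 2 in slot 1, bidder 3 in slot 2,
bidder 1 in slot 3, bidder 4 in slot 4 (zero-indexed). -/
def perm2314 : Equiv.Perm (Fin 4) :=
  ⟨![1, 2, 0, 3], ![2, 0, 1, 3], by intro x; fin_cases x <;> rfl, by intro x; fin_cases x <;> rfl⟩

/-- For the 4-bidder GSP instance with values `v = (1, 0.53, 0.15, 0)`,
CTRs `α = (1, 0.55, 0.47, 0.47)` and allocation `π = (2, 3, 1, 4)`, the ratio of the
optimal social welfare to the allocated social welfare equals `2724/2165 > 1.258`;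
consequently (witnessed by the equilibrium bids `b = (0, 0.53, 0.15, 0)`) the pure
price of anarchy of GSP with 4 slots is at least `2724/2165`. -/
theorem gsp_four_slots_poa_lower_bound :
    (∑ i, (![(1 : ℝ), 0.55, 0.47, 0.47]) i * (![(1 : ℝ), 0.53, 0.15, 0]) i) /
        (∑ j, (![(1 : ℝ), 0.55, 0.47, 0.47]) j * (![(1 : ℝ), 0.53, 0.15, 0]) (perm2314 j)) =
      2724 / 2165 ∧
    (2724 / 2165 : ℝ) > 1.258 ∧
    ∃ b : Fin 4 → ℝ,
      Conservative ![(1 : ℝ), 0.53, 0.15, 0] b ∧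
      PureNash ![(1 : ℝ), 0.53, 0.15, 0] ![(1 : ℝ), 0.55, 0.47, 0.47] b perm2314 ∧
      ∑ i, (![(1 : ℝ), 0.55, 0.47, 0.47]) i * (![(1 : ℝ), 0.53, 0.15, 0]) i =
        (2724 / 2165) *
          ∑ j, (![(1 : ℝ), 0.55, 0.47, 0.47]) j * (![(1 : ℝ), 0.53, 0.15, 0]) (perm2314 j) := by
  refine ⟨?_, by norm_num, ![0, 0.53, 0.15, 0], ?_, ⟨?_, ?_⟩, ?_⟩
  · simp only [Fin.sum_univ_four, perm2314, Equiv.coe_fn_mk, Matrix.cons_val]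
    norm_num [Matrix.cons_val_zero, Matrix.cons_val_one]
  · intro i; fin_cases i <;> norm_num
  · intro i j hij
    fin_cases i <;> fin_cases j <;> simp only [perm2314, Equiv.coe_fn_mk, Matrix.cons_val] <;>
      first
        | exact absurd hij (by decide)
        | norm_num [Matrix.cons_val_two, Matrix.cons_val_three]
  · intro j i
    constructor <;> intro h <;>
      fin_cases j <;> fin_cases i <;>
      simp_all [perm2314, nextPay, Fin.lt_def] <;> norm_num
  · simp only [Fin.sum_univ_four, perm2314, Equiv.coe_fn_mk, Matrix.cons_val]
    norm_num
end

section
/- For every n ≥ 3, consider the GSP instance with n bidders and n slots given by CTRs α_1 = 1, α_2 = 0.55, α_j = 0.47 for 3 ≤ j ≤ n; values v_1 = 1, v_2 = 0.53, v_3 = 0.15, v_i = 0 for 4 ≤ i ≤ n; and bids b_1 = 0, b_2 = 0.53, b_3 = 0.15, b_i = 0 for 4 ≤ i ≤ n. Then (b, π_n) with π_n = (2, 3, 4, ..., n, 1) is a conservative pure Nash equilibrium of GSP, and the ratio of optimal welfare Σ_i α_i v_i to equilibrium welfare Σ_{i=1}^{n−1} α_i v_{i+1} + α_n v_1 equals 2724/2165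 > 1.258. -/
/-- For every `n ≥ 3`, the GSP instance with CTRs `α = (1, 0.55, 0.47, ..., 0.47)`,
values `v = (1, 0.53, 0.15, 0, ..., 0)` and bids `b = (0, 0.53, 0.15, 0, ..., 0)` is
such that `(b, π_n)` with `π_n = (2, 3, ..., n, 1)` (the cyclic shift) is a
conservative pure Nash equilibrium, and the ratio of the optimal social welfare to
the allocated social welfare equals `2724/2165 > 1.258`. -/
theorem gsp_cyclic_permutation_poa_tight_example (n : ℕ) (hn : 3 ≤ n)
    (α : Fin n → ℝ) (hα : ∀ i : Fin n, α i =
      if (i : ℕ) = 0 then 1 else if (i : ℕ) = 1 then 0.55 else 0.47)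
    (v : Fin n → ℝ) (hv : ∀ i : Fin n, v i =
      if (i : ℕ) = 0 then 1 else if (i : ℕ) = 1 then 0.53 else if (i : ℕ) = 2 then 0.15 else 0)
    (b : Fin n → ℝ) (hb : ∀ i : Fin n, b i =
      if (i : ℕ) = 1 then 0.53 else if (i : ℕ) = 2 then 0.15 else 0) :
    Conservative v b ∧ PureNash v α b (finRotate n) ∧
    (∑ i, α i * v i) / (∑ i, α i * v (finRotate n i)) = 2724 / 2165 ∧
    (2724 / 2165 : ℝ) > 1.258 := by
  obtain ⟨m, rfl⟩ : ∃ m, n = m + 1 := ⟨n - 1, by omega⟩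
  have hm : 2 ≤ m := by omega
  have hval : ∀ j : Fin (m + 1),
      ((finRotate (m + 1) j : Fin (m + 1)) : ℕ) = if (j : ℕ) + 1 = m + 1 then 0 else (j : ℕ) + 1 := by
    intro j
    rw [finRotate_succ_apply, Fin.val_add_one]
    rcases eq_or_ne ((j : ℕ)) m with h | h
    · rw [if_pos (Fin.ext (h.trans (Fin.val_last m).symm)), if_pos (by omega)]
    · rw [if_neg (fun hc => h (by rw [hc, Fin.val_last])), if_neg (by omega)]
  have hbπ : ∀ j : Fin (m + 1), b (finRotate (m + 1) j) =
      if (j : ℕ) = 0 then 0.53 else if (j : ℕ) = 1 then 0.15 else 0 := by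
    intro j
    have hj := j.isLt
    rw [hb, hval]
    split_ifs
    all_goals try (exfalso; assumption)
    all_goals try (exfalso; omega)
    all_goals norm_num
  have hvπ : ∀ j : Fin (m + 1), v (finRotate (m + 1) j) =
      if (j : ℕ) = 0 then 0.53 else if (j : ℕ) = 1 then 0.15 else
        if (j : ℕ) = m then 1 else 0 := by
    intro j
    have hj := j.isLt
    rw [hv, hval]
    split_ifs
    all_goals try (exfalso; assumption)
    all_goals try (exfalso; omega)
    all_goals norm_num
  have hnp : ∀ j : Fin (m + 1), nextPay b (finRotate (m + 1)) j =
      if (j : ℕ) = 0 then 0.15 else 0 := by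
    intro j
    have hj := j.isLt
    unfold nextPay
    rcases lt_or_ge ((j : ℕ) + 1) (m + 1) with h | h
    · rw [dif_pos h, hbπ ⟨(j : ℕ) + 1, h⟩]
      simp only [Fin.val_mk]
      split_ifs
      all_goals try (exfalso; assumption)
      all_goals try (exfalso; omega)
      all_goals norm_num
    · rw [dif_neg (by omega)]
      split_ifs
      all_goals try (exfalso; assumption)
      all_goals try (exfalso; omega)
      all_goals norm_num
  refine ⟨?_, ⟨?_, ?_⟩, ?_, by norm_num⟩
  · -- Conservative
    intro i
    rw [hb, hv]
    split_ifs
    all_goals try (exfalso; assumption)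
    all_goals try (exfalso; omega)
    all_goals norm_num
  · -- Consistent
    intro i j hij
    have hij' : (i : ℕ) ≤ (j : ℕ) := hij
    rw [hbπ, hbπ]
    split_ifs
    all_goals try (exfalso; assumption)
    all_goals try (exfalso; omega)
    all_goals norm_num
  · -- Nash
    intro j i
    have hi := i.isLt
    have hj := j.isLt
    constructor
    · intro hlt
      have hlt' : (i : ℕ) < (j : ℕ) := hlt
      rw [hvπ, hbπ, hnp, hα i, hα j]
      split_ifs
      all_goals try (exfalso; assumption)
      all_goals try (exfalso; omega)
      all_goals norm_num
    · intro hlt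
      have hlt' : (j : ℕ) < (i : ℕ) := hlt
      rw [hvπ, hnp i, hnp j, hα i, hα j]
      split_ifs
      all_goals try (exfalso; assumption)
      all_goals try (exfalso; omega)
      all_goals norm_num
  · -- the ratio
    set i0 : Fin (m + 1) := ⟨0, by omega⟩ with hi0
    set i1 : Fin (m + 1) := ⟨1, by omega⟩ with hi1
    set i2 : Fin (m + 1) := ⟨2, by omega⟩ with hi2
    set iM : Fin (m + 1) := ⟨m, by omega⟩ with hiM
    have h1 : (∑ i, α i * v i) = 1.362 := by
      have hpt : ∀ i : Fin (m + 1), α i * v i =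
          (if i = i0 then (1 : ℝ) else 0) + (if i = i1 then 0.2915 else 0)
            + (if i = i2 then 0.0705 else 0) := by
        intro i
        have hi := i.isLt
        rw [hα, hv]
        simp only [Fin.ext_iff, hi0, hi1, hi2, Fin.val_mk]
        split_ifs
        all_goals try (exfalso; assumption)
        all_goals try (exfalso; omega)
        all_goals norm_num
      rw [Finset.sum_congr rfl fun i _ => hpt i]
      rw [Finset.sum_add_distrib, Finset.sum_add_distrib]
      rw [Finset.sum_ite_eq' Finset.univ i0 (fun _ => (1 : ℝ)),
        Finset.sum_ite_eq' Finset.univ i1 (fun _ => (0.2915 : ℝ)),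
        Finset.sum_ite_eq' Finset.univ i2 (fun _ => (0.0705 : ℝ))]
      simp only [Finset.mem_univ, if_true]
      norm_num
    have h2 : (∑ i, α i * v (finRotate (m + 1) i)) = 1.0825 := by
      have hpt : ∀ i : Fin (m + 1), α i * v (finRotate (m + 1) i) =
          (if i = i0 then (0.53 : ℝ) else 0) + (if i = i1 then 0.0825 else 0)
            + (if i = iM then 0.47 else 0) := by
        intro i
        have hi := i.isLt
        rw [hα, hvπ]
        simp only [Fin.ext_iff, hi0, hi1, hiM, Fin.val_mk]
        split_ifs
        all_goals try (exfalso; assumption)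
        all_goals try (exfalso; omega)
        all_goals norm_num
      rw [Finset.sum_congr rfl fun i _ => hpt i]
      rw [Finset.sum_add_distrib, Finset.sum_add_distrib]
      rw [Finset.sum_ite_eq' Finset.univ i0 (fun _ => (0.53 : ℝ)),
        Finset.sum_ite_eq' Finset.univ i1 (fun _ => (0.0825 : ℝ)),
        Finset.sum_ite_eq' Finset.univ iM (fun _ => (0.47 : ℝ))]
      simp only [Finset.mem_univ, if_true]
      norm_num
    rw [h1, h2]
    norm_num
end

section
/- Let n ≥ 2 and suppose (b, π_n) is a conservative pure Nash equilibrium of the GSP auction with values 1 = v_1 ≥ ... ≥ v_n ≥ 0 and CTRs 1 = α_1 ≥ ... ≥ α_n ≥ 0, where π_n = (2, 3, ..., n, 1). Then for every slot index i with 1 ≤ i ≤ n−1, one has α_i v_{i+1} ≥ (α_i − α_n) v_1. In particular, v_2 ≥ (1 − α_n/α_1) v_1 when α_1 > 0. -/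
set_option maxHeartbeats 1000000


/-- If `(b, π_n)` with `π_n = (2, 3, ..., n, 1)` (the cyclic shift, `finRotate n`) is a
conservative pure Nash equilibrium of the `n`-slot GSP auction (`n ≥ 2`), then for
every slot `i` other than the last one, `α_i v_{i+1} ≥ (α_i − α_n) v_1`; in particular
`v_2 ≥ (1 − α_n/α_1) v_1` when `α_1 > 0`. -/
theorem nash_equilibrium_value_constraints (n : ℕ) (hn : 2 ≤ n) (v α b : Fin n → ℝ)
    (hv1 : v ⟨0, by omega⟩ = 1) (hvsorted : ∀ i j : Fin n, i ≤ j → v j ≤ v i)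
    (hvnonneg : ∀ i, 0 ≤ v i)
    (hα1 : α ⟨0, by omega⟩ = 1) (hαsorted : ∀ i j : Fin n, i ≤ j → α j ≤ α i)
    (hαnonneg : ∀ i, 0 ≤ α i)
    (hcons : Conservative v b) (hne : PureNash v α b (finRotate n)) :
    (∀ i : Fin n, ∀ h : (i : ℕ) + 1 < n,
      (α i - α ⟨n - 1, by omega⟩) * v ⟨0, by omega⟩ ≤ α i * v ⟨(i : ℕ) + 1, h⟩) ∧
    (0 < α ⟨0, by omega⟩ →
      (1 - α ⟨n - 1, by omega⟩ / α ⟨0, by omega⟩) * v ⟨0, by omega⟩ ≤ v ⟨1, by omega⟩) := by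

  obtain ⟨m, rfl⟩ : ∃ m, n = m + 1 := ⟨n - 1, by omega⟩
  have hm : 1 ≤ m := by omega
  have hrotlast : finRotate (m+1) ⟨m + 1 - 1, by omega⟩ = ⟨0, by omega⟩ := by
    simp [finRotate_succ_apply, Fin.ext_iff, Fin.add_def]
  have hnp : nextPay b (finRotate (m+1)) ⟨m + 1 - 1, by omega⟩ = 0 := by
    unfold nextPay
    rw [dif_neg]
    simp
  have main : ∀ i : Fin (m+1), ∀ h : (i : ℕ) + 1 < m + 1,
      (α i - α ⟨m + 1 - 1, by omega⟩) * v ⟨0, by omega⟩ ≤ α i * v ⟨(i : ℕ) + 1, h⟩ := by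
    intro i h
    have hpi : finRotate (m+1) i = ⟨(i : ℕ) + 1, h⟩ := by
      simp [finRotate_succ_apply, Fin.ext_iff, Fin.add_def, Nat.mod_eq_of_lt h]
    have hij : i < (⟨m + 1 - 1, by omega⟩ : Fin (m+1)) := by
      simp [Fin.lt_def]; omega
    have key := (hne.2 ⟨m + 1 - 1, by omega⟩ i).1 hij
    simp only [hrotlast, hnp, hpi] at key
    have h1 : α i * b ⟨(i : ℕ) + 1, h⟩ ≤ α i * v ⟨(i : ℕ) + 1, h⟩ :=
      mul_le_mul_of_nonneg_left (hcons _) (hαnonneg i)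
    nlinarith [key, h1]
  refine ⟨main, fun _ => ?_⟩
  have := main ⟨0, by omega⟩ (by simp; omega)
  rw [hα1] at this ⊢
  simpa using this
end

section
/- Suppose (b, π) with π = (2, 3, 1, 4) is a conservative pure Nash equilibrium of the 4-slot GSP auction with values 1 = v_1 ≥ v_2 ≥ v_3 ≥ v_4 and CTRs 1 = α_1 ≥ α_2 ≥ α_3 ≥ α_4 ≥ 0, and that v_4 = 0. Then b_4 = 0, and ((b_1, b_2, b_3), (2, 3, 1)) is a conservative pure Nash equilibrium of the 3-slot GSP auction with values (v_1, v_2, v_3) and CTRs (α_1, α_2, α_3). -/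
/-- The permutation `(2, 3, 1)` of `{1, 2, 3}` (zero-indexed). -/
def perm231 : Equiv.Perm (Fin 3) :=
  ⟨![1, 2, 0], ![2, 0, 1], by intro x; fin_cases x <;> rfl, by intro x; fin_cases x <;> rfl⟩

private lemma fin4_mk2 (h : 2 < 4) : (⟨2, h⟩ : Fin 4) = 2 := rfl
private lemma fin4_mk1 (h : 1 < 4) : (⟨1, h⟩ : Fin 4) = 1 := rfl
private lemma fin4_mk0 (h : 0 < 4) : (⟨0, h⟩ : Fin 4) = 0 := rfl
private lemma fin4_mk3 (h : 3 < 4) : (⟨3, h⟩ : Fin 4) = 3 := rfl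

/-- If `(b, (2,3,1,4))` is a conservative pure Nash equilibrium of the 4-slot GSP
auction with `v_4 = 0` (and nonnegative bids), then `b_4 = 0` and restricting to the
first three bidders and slots yields a conservative pure Nash equilibrium
`((b_1, b_2, b_3), (2,3,1))` of the 3-slot GSP auction. -/
theorem nash_restriction_to_three_slots (v α b : Fin 4 → ℝ)
    (hv1 : v 0 = 1) (hvsorted : ∀ i j : Fin 4, i ≤ j → v j ≤ v i) (hv4 : v 3 = 0)
    (hα1 : α 0 = 1) (hαsorted : ∀ i j : Fin 4, i ≤ j → α j ≤ α i) (hαnonneg : ∀ i, 0 ≤ α i)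
    (hbnonneg : ∀ i, 0 ≤ b i)
    (hcons : Conservative v b) (hne : PureNash v α b perm2314) :
    b 3 = 0 ∧
    Conservative (fun i : Fin 3 => v (Fin.castLE (by omega) i))
      (fun i : Fin 3 => b (Fin.castLE (by omega) i)) ∧
    PureNash (fun i : Fin 3 => v (Fin.castLE (by omega) i))
      (fun i : Fin 3 => α (Fin.castLE (by omega) i))
      (fun i : Fin 3 => b (Fin.castLE (by omega) i)) perm231 := by
  obtain ⟨hc, hn⟩ := hne
  have hb3 : b 3 = 0 := le_antisymm (hv4 ▸ hcons 3) (hbnonneg 3)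
  have h01 := hc 0 1 (by decide)
  have h02 := hc 0 2 (by decide)
  have h12 := hc 1 2 (by decide)
  simp [perm2314] at h01 h02 h12
  have e00 := hn 0 0
  have e01 := hn 0 1
  have e02 := hn 0 2
  have e10 := hn 1 0
  have e12 := hn 1 2
  have e20 := hn 2 0
  have e21 := hn 2 1
  simp [perm2314, nextPay, hb3, Fin.lt_def] at e01 e02 e10 e12 e20 e21
  refine ⟨hb3, fun i => hcons _, ?_, ?_⟩
  · intro i j hij
    fin_cases i <;> fin_cases j <;>
      first
        | exact absurd hij (by decide)
        | (simp only [perm231]; norm_num [Fin.castLE, fin4_mk0, fin4_mk1, fin4_mk2, fin4_mk3] <;> linarith)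
  · intro j i
    fin_cases j <;> fin_cases i <;> constructor <;> intro hlt <;>
      first
        | exact absurd hlt (by decide)
        | (simp only [perm231, nextPay]; norm_num [Fin.castLE, fin4_mk0, fin4_mk1, fin4_mk2, fin4_mk3] <;> linarith)
end
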